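/- John's ellipsoid feature bound: if Σ = E_{μ}[φφᵀ] is positive definite where μ is the D-optimal design distribution maximizing ln det E_ρ[φφᵀ] over distributions ρ on a finite set of feature vectors in ℝʳ spanning ℝʳ, then every feature vector φ in that set satisfies φᵀ Σ^{-1} φ ≤ r. -/

import Mathlib

open Matrix

set_option maxHeartbeats 1000000

lemma det_rank_one_update {r : ℕ} (Sig : Matrix (Fin r) (Fin r) ℝ) (hpd : Sig.PosDef)
    (s : ℝ) (φ : Fin r → ℝ) :
    (Sig + s • vecMulVec φ φ).det = Sig.det * (1 + s * (φ ⬝ᵥ Sig⁻¹.mulVec φ)) := by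
  have h1 : s • vecMulVec φ φ = replicateCol Unit (s • φ) * replicateRow Unit φ := by
    rw [← vecMulVec_eq]; ext i j; simp [vecMulVec, mul_assoc]
  rw [h1, det_add_replicateCol_mul_replicateRow hpd.det_pos.ne'.isUnit]
  congr 1
  rw [det_unique]
  simp only [Matrix.add_apply, Matrix.one_apply_eq, Matrix.mul_apply, Matrix.replicateRow,
    Matrix.replicateCol, dotProduct, mulVec, of_apply, Finset.sum_mul, Finset.mul_sum]
  congr 1
  rw [Finset.sum_comm]
  exact Finset.sum_congr rfl fun i _ => Finset.sum_congr rfl fun j _ => by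
    simp [Pi.smul_apply, smul_eq_mul]; ring

/-- John's ellipsoid / Kiefer–Wolfowitz feature bound: if `Σ = E_μ[φ φᵀ]` where `μ`
is the D-optimal design distribution maximizing `ln det E_ρ[φ φᵀ]` over distributions
`ρ` on a finite spanning set of feature vectors in `ℝʳ`, then every feature vector
`φ` in the set satisfies `φᵀ Σ⁻¹ φ ≤ r`. -/
theorem stmt11 {r : ℕ} (S : Finset (Fin r → ℝ))
    (hspan : Submodule.span ℝ (S : Set (Fin r → ℝ)) = ⊤)
    (μ : (Fin r → ℝ) → ℝ) (hμ0 : ∀ φ ∈ S, 0 ≤ μ φ) (hμ1 : ∑ φ ∈ S, μ φ = 1)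
    (Sig : Matrix (Fin r) (Fin r) ℝ)
    (hSig : Sig = ∑ φ ∈ S, μ φ • Matrix.vecMulVec φ φ) (hpd : Sig.PosDef)
    (hmax : ∀ ρ : (Fin r → ℝ) → ℝ, (∀ φ ∈ S, 0 ≤ ρ φ) → (∑ φ ∈ S, ρ φ = 1) →
      Real.log (∑ φ ∈ S, ρ φ • Matrix.vecMulVec φ φ).det ≤ Real.log Sig.det) :
    ∀ φ ∈ S, φ ⬝ᵥ Sig⁻¹.mulVec φ ≤ (r : ℝ) := by
  intro φ hφ
  rcases Nat.eq_zero_or_pos r with hr0 | hrpos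
  · subst hr0; simp [dotProduct]
  by_contra hqcon
  push_neg at hqcon
  obtain ⟨q, hqdef⟩ : ∃ q : ℝ, φ ⬝ᵥ Sig⁻¹.mulVec φ = q := ⟨_, rfl⟩
  rw [hqdef] at hqcon
  have hq : (r : ℝ) < q := hqcon
  have hR1 : (1 : ℝ) ≤ (r : ℝ) := by exact_mod_cast hrpos
  have hq1 : 1 < q := lt_of_le_of_lt hR1 hq
  obtain ⟨c, hc⟩ : ∃ c : ℝ, ((r : ℝ) - 1) * (q - 1) = c := ⟨_, rfl⟩
  have hc0 : 0 ≤ c := hc ▸ mul_nonneg (by linarith) (by linarith)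
  obtain ⟨t, ht⟩ : ∃ t : ℝ, min (1/2 : ℝ) ((q - r) / (2 * c + 1)) = t := ⟨_, rfl⟩
  have htpos : 0 < t := by
    rw [← ht]; exact lt_min (by norm_num) (div_pos (by linarith) (by linarith))
  have hthalf : t ≤ 1/2 := by rw [← ht]; exact min_le_left _ _
  have ht1 : t < 1 := lt_of_le_of_lt hthalf (by norm_num)
  have htc : c * t < (q - r) / 2 := by
    have h1 : t ≤ (q - r) / (2 * c + 1) := by rw [← ht]; exact min_le_right _ _
    have h2 : c * t ≤ c * ((q - r) / (2 * c + 1)) := mul_le_mul_of_nonneg_left h1 hc0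
    have h3 : c * ((q - r) / (2 * c + 1)) < (q - r) / 2 := by
      rw [← mul_div_assoc, div_lt_div_iff₀ (by linarith) (by norm_num)]
      nlinarith [sub_pos.mpr hq]
    linarith
  -- the perturbed distribution
  set ρ : (Fin r → ℝ) → ℝ := fun ψ => (1 - t) * μ ψ + if ψ = φ then t else 0 with hρ
  have hρ0 : ∀ ψ ∈ S, 0 ≤ ρ ψ := by
    intro ψ hψ
    have := hμ0 ψ hψ
    simp only [hρ]
    split <;> nlinarith
  have hρ1 : ∑ ψ ∈ S, ρ ψ = 1 := by
    simp only [hρ]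
    rw [Finset.sum_add_distrib, ← Finset.mul_sum, hμ1, Finset.sum_ite_eq' S φ, if_pos hφ]
    ring
  -- the perturbed matrix
  have h1tpos : (0:ℝ) < 1 - t := by linarith
  have hmat : (∑ ψ ∈ S, ρ ψ • Matrix.vecMulVec ψ ψ)
      = (1 - t) • (Sig + (t / (1 - t)) • vecMulVec φ φ) := by
    have h2 : (t • vecMulVec φ φ : Matrix (Fin r) (Fin r) ℝ)
        = ∑ ψ ∈ S, (if ψ = φ then t else 0) • vecMulVec ψ ψ := by
      simp only [ite_smul, zero_smul, Finset.sum_ite_eq', if_pos hφ]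
    rw [smul_add, smul_smul, mul_div_cancel₀ _ h1tpos.ne', hSig, Finset.smul_sum, h2,
      ← Finset.sum_add_distrib]
    refine Finset.sum_congr rfl fun ψ hψ => ?_
    simp only [hρ]
    rw [add_smul, ← smul_smul]
  have hdet : (∑ ψ ∈ S, ρ ψ • Matrix.vecMulVec ψ ψ).det
      = (1 - t) ^ r * (Sig.det * (1 + (t / (1 - t)) * q)) := by
    rw [hmat, det_smul, det_rank_one_update Sig hpd, Fintype.card_fin, hqdef]
  -- Bernoulli bound
  have hb := one_add_mul_le_pow (a := -t) (by linarith) (r - 1)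
  have hcast : ((r - 1 : ℕ) : ℝ) = (r : ℝ) - 1 := by
    rw [Nat.cast_sub hrpos]; norm_num
  have hpow : 1 - ((r:ℝ) - 1) * t ≤ (1 - t) ^ (r - 1) := by
    rw [hcast] at hb
    have e : 1 + ((r:ℝ) - 1) * (-t) = 1 - ((r:ℝ) - 1) * t := by ring
    rw [e] at hb
    have e2 : (1 + (-t)) = 1 - t := by ring
    rwa [e2] at hb
  have hq1t : (0:ℝ) < 1 + (q - 1) * t := by nlinarith
  have key : 1 < (1 - t) ^ (r - 1) * (1 + (q - 1) * t) := by
    have hstep : 1 < (1 - ((r:ℝ) - 1) * t) * (1 + (q - 1) * t) := by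
      have e1 : c * t * t < (q - (r:ℝ)) / 2 * t := mul_lt_mul_of_pos_right htc htpos
      have e2 : (0:ℝ) < (q - (r:ℝ)) * t := mul_pos (by linarith) htpos
      have hct : ((r:ℝ) - 1) * (q - 1) * t * t = c * t * t := by rw [hc]
      nlinarith [e1, e2, hct]
    calc 1 < (1 - ((r:ℝ) - 1) * t) * (1 + (q - 1) * t) := hstep
      _ ≤ (1 - t) ^ (r - 1) * (1 + (q - 1) * t) :=
        mul_le_mul_of_nonneg_right hpow (le_of_lt hq1t)
  have hfact : (1 - t) ^ r * (1 + (t / (1 - t)) * q)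
      = (1 - t) ^ (r - 1) * (1 + (q - 1) * t) := by
    have hr' : (1 - t) ^ r = (1 - t) ^ (r - 1) * (1 - t) := by
      rw [← pow_succ, Nat.sub_add_cancel hrpos]
    have h' : (1 - t) * (t / (1 - t)) = t := by field_simp
    have h'' : (1 - t) * (1 + t / (1 - t) * q) = 1 + (q - 1) * t := by
      rw [mul_add, mul_one, ← mul_assoc, h']; ring
    rw [hr', mul_assoc, h'']
  have hlt : Sig.det < (∑ ψ ∈ S, ρ ψ • Matrix.vecMulVec ψ ψ).det := by
    rw [hdet]
    have e : (1 - t) ^ r * (Sig.det * (1 + (t / (1 - t)) * q))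
        = Sig.det * ((1 - t) ^ r * (1 + (t / (1 - t)) * q)) := mul_left_comm _ _ _
    rw [e, hfact]
    nth_rewrite 1 [show Sig.det = Sig.det * 1 by ring]
    exact mul_lt_mul_of_pos_left key hpd.det_pos
  have hle := hmax ρ hρ0 hρ1
  have hloglt := Real.log_lt_log hpd.det_pos hlt
  linarith
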